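/- In the coalescence setting (G is the coalescence of H₁ and H₂ via the non-isolated vertex x), if x is a critical vertex of H₁ or x is a critical vertex of H₂, then γ(G) = γ(H₁) + γ(H₂) − 1. -/
import Mathlib


open SimpleGraph Set

/-- `S` is a dominating set of the induced subgraph of `G` on the vertex set `A`:
`S ⊆ A` and every vertex of `A` is in the closed neighborhood of some vertex of `S`. -/
def IsDomOn {V : Type*} (G : SimpleGraph V) (A S : Set V) : Prop :=
  S ⊆ A ∧ ∀ v ∈ A, ∃ s ∈ S, s = v ∨ G.Adj s v

/-- The domination number of the induced subgraph of `G` on the vertex set `A`. -/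
noncomputable def domNumOn {V : Type*} (G : SimpleGraph V) (A : Set V) : ℕ :=
  sInf {n | ∃ S : Set V, IsDomOn G A S ∧ S.ncard = n}

/-- The domination number of `G`. -/
noncomputable def domNum {V : Type*} (G : SimpleGraph V) : ℕ :=
  domNumOn G Set.univ

/-- `y` is a critical vertex of the induced subgraph of `G` on `A`:
deleting `y` decreases the domination number. -/
def IsCritVertexOn {V : Type*} (G : SimpleGraph V) (A : Set V) (y : V) : Prop :=
  domNumOn G (A \ {y}) < domNumOn G A

/-- The induced subgraph of `G` on `A` is critical: all its vertices are critical. -/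
def CriticalOn {V : Type*} (G : SimpleGraph V) (A : Set V) : Prop :=
  ∀ y ∈ A, IsCritVertexOn G A y

/-- The induced subgraph of `G` on `A` is weak bicritical: no vertex deletion increases the
domination number (`V⁺ = ∅`), and deleting any vertex that keeps the domination number
unchanged (a vertex of `V⁰`) yields a critical graph. -/
def WeakBicriticalOn {V : Type*} (G : SimpleGraph V) (A : Set V) : Prop :=
  (∀ y ∈ A, domNumOn G (A \ {y}) ≤ domNumOn G A) ∧
  (∀ y ∈ A, domNumOn G (A \ {y}) = domNumOn G A → CriticalOn G (A \ {y}))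

lemma isDomOn_self {V : Type*} (G : SimpleGraph V) (A : Set V) : IsDomOn G A A :=
  ⟨subset_rfl, fun v hv => ⟨v, hv, Or.inl rfl⟩⟩

lemma domNumOn_exists {V : Type*} (G : SimpleGraph V) (A : Set V) :
    ∃ S, IsDomOn G A S ∧ S.ncard = domNumOn G A :=
  Nat.sInf_mem (⟨A.ncard, A, isDomOn_self G A, rfl⟩ :
    {n | ∃ S : Set V, IsDomOn G A S ∧ S.ncard = n}.Nonempty)

lemma domNumOn_le {V : Type*} (G : SimpleGraph V) {A S : Set V} (h : IsDomOn G A S) :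
    domNumOn G A ≤ S.ncard :=
  Nat.sInf_le ⟨S, h, rfl⟩

lemma dom_side {V : Type*} (G : SimpleGraph V) (x : V) (V1 V2 : Set V)
    (hunion : V1 ∪ V2 = Set.univ) (hx1 : x ∈ V1)
    (hsep : ∀ a ∈ V1, ∀ b ∈ V2, a ≠ x → b ≠ x → ¬ G.Adj a b)
    {v : V} (hv : v ∈ V1) (hvx : v ≠ x) {s : V} (hs : s = v ∨ G.Adj s v) : s ∈ V1 := by
  rcases hs with rfl | hadj
  · exact hv
  · have hmem : s ∈ V1 ∪ V2 := by rw [hunion]; trivial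
    rcases hmem with h | h
    · exact h
    · by_cases hsx : s = x
      · exact hsx ▸ hx1
      · exact absurd hadj.symm (hsep v hv s h hvx hsx)

lemma ncard_inter_sides_le {V : Type*} [Fintype V] {x : V} {V1 V2 D : Set V}
    (hunion : V1 ∪ V2 = Set.univ) (hinter : V1 ∩ V2 = {x}) :
    (D ∩ V1).ncard + (D ∩ V2).ncard ≤ D.ncard + 1 := by
  have key := Set.ncard_union_add_ncard_inter (D ∩ V1) (D ∩ V2)
  have h1 : (D ∩ V1 ∪ D ∩ V2).ncard ≤ D.ncard :=
    Set.ncard_le_ncard (union_subset inter_subset_left inter_subset_left) D.toFinite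
  have h2 : ((D ∩ V1) ∩ (D ∩ V2)).ncard ≤ 1 := by
    have hsub : (D ∩ V1) ∩ (D ∩ V2) ⊆ {x} := by
      intro a ⟨⟨_, ha1⟩, ⟨_, ha2⟩⟩
      rw [← hinter]; exact ⟨ha1, ha2⟩
    simpa using Set.ncard_le_ncard hsub (Set.finite_singleton x)
  omega

lemma lower_mem {V : Type*} [Fintype V] (G : SimpleGraph V) (x : V) (V1 V2 D : Set V)
    (hunion : V1 ∪ V2 = Set.univ) (hinter : V1 ∩ V2 = {x})
    (hsep : ∀ a ∈ V1, ∀ b ∈ V2, a ≠ x → b ≠ x → ¬ G.Adj a b)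
    (hsep' : ∀ a ∈ V2, ∀ b ∈ V1, a ≠ x → b ≠ x → ¬ G.Adj a b)
    (hx1 : x ∈ V1) (hx2 : x ∈ V2)
    (hD : IsDomOn G Set.univ D) (hxD : x ∈ D) :
    domNumOn G V1 + domNumOn G V2 ≤ D.ncard + 1 := by
  have hunion' : V2 ∪ V1 = Set.univ := by rw [union_comm]; exact hunion
  have hd1 : IsDomOn G V1 (D ∩ V1) := by
    refine ⟨inter_subset_right, fun v hv => ?_⟩
    by_cases hvx : v = x
    · exact ⟨x, ⟨hxD, hx1⟩, Or.inl hvx.symm⟩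
    · obtain ⟨t, ht, hdom⟩ := hD.2 v (mem_univ v)
      exact ⟨t, ⟨ht, dom_side G x V1 V2 hunion hx1 hsep hv hvx hdom⟩, hdom⟩
  have hd2 : IsDomOn G V2 (D ∩ V2) := by
    refine ⟨inter_subset_right, fun v hv => ?_⟩
    by_cases hvx : v = x
    · exact ⟨x, ⟨hxD, hx2⟩, Or.inl hvx.symm⟩
    · obtain ⟨t, ht, hdom⟩ := hD.2 v (mem_univ v)
      exact ⟨t, ⟨ht, dom_side G x V2 V1 hunion' hx2 hsep' hv hvx hdom⟩, hdom⟩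
  have h1 := domNumOn_le G hd1
  have h2 := domNumOn_le G hd2
  have h3 := ncard_inter_sides_le (D := D) hunion hinter
  omega

lemma lower_one {V : Type*} [Fintype V] (G : SimpleGraph V) (x : V) (V1 V2 D : Set V)
    (hunion : V1 ∪ V2 = Set.univ) (hinter : V1 ∩ V2 = {x})
    (hsep : ∀ a ∈ V1, ∀ b ∈ V2, a ≠ x → b ≠ x → ¬ G.Adj a b)
    (hsep' : ∀ a ∈ V2, ∀ b ∈ V1, a ≠ x → b ≠ x → ¬ G.Adj a b)
    (hx1 : x ∈ V1) (hx2 : x ∈ V2)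
    (hD : IsDomOn G Set.univ D) (hxD : x ∉ D)
    {s : V} (hs : s ∈ D) (hsadj : G.Adj s x) (hsV1 : s ∈ V1) :
    domNumOn G V1 + domNumOn G V2 ≤ D.ncard + 1 := by
  have hunion' : V2 ∪ V1 = Set.univ := by rw [union_comm]; exact hunion
  have hd1 : IsDomOn G V1 (D ∩ V1) := by
    refine ⟨inter_subset_right, fun v hv => ?_⟩
    by_cases hvx : v = x
    · exact ⟨s, ⟨hs, hsV1⟩, Or.inr (hvx ▸ hsadj)⟩
    · obtain ⟨t, ht, hdom⟩ := hD.2 v (mem_univ v)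
      exact ⟨t, ⟨ht, dom_side G x V1 V2 hunion hx1 hsep hv hvx hdom⟩, hdom⟩
  have hd2 : IsDomOn G V2 (D ∩ V2 ∪ {x}) := by
    refine ⟨union_subset inter_subset_right (by simpa using hx2), fun v hv => ?_⟩
    by_cases hvx : v = x
    · exact ⟨x, Or.inr rfl, Or.inl hvx.symm⟩
    · obtain ⟨t, ht, hdom⟩ := hD.2 v (mem_univ v)
      exact ⟨t, Or.inl ⟨ht, dom_side G x V2 V1 hunion' hx2 hsep' hv hvx hdom⟩, hdom⟩
  have h1 := domNumOn_le G hd1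
  have h2 := domNumOn_le G hd2
  have hc2 : (D ∩ V2 ∪ {x}).ncard ≤ (D ∩ V2).ncard + 1 := by
    simpa using Set.ncard_union_le (D ∩ V2) {x}
  have hdisj : Disjoint (D ∩ V1) (D ∩ V2) := by
    rw [Set.disjoint_left]
    rintro a ⟨haD, ha1⟩ ⟨_, ha2⟩
    have hax : a = x := by
      have : a ∈ ({x} : Set V) := hinter ▸ (⟨ha1, ha2⟩ : a ∈ V1 ∩ V2)
      simpa using this
    exact hxD (hax ▸ haD)
  have hsum : (D ∩ V1).ncard + (D ∩ V2).ncard ≤ D.ncard := by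
    rw [← Set.ncard_union_eq hdisj]
    exact Set.ncard_le_ncard (union_subset inter_subset_left inter_subset_left) D.toFinite
  omega

lemma lower {V : Type*} [Fintype V] (G : SimpleGraph V) (x : V) (V1 V2 : Set V)
    (hunion : V1 ∪ V2 = Set.univ) (hinter : V1 ∩ V2 = {x})
    (hsep : ∀ a ∈ V1, ∀ b ∈ V2, a ≠ x → b ≠ x → ¬ G.Adj a b) :
    domNumOn G V1 + domNumOn G V2 ≤ domNumOn G Set.univ + 1 := by
  have hx1 : x ∈ V1 := (hinter ▸ (rfl : x ∈ ({x} : Set V)) : x ∈ V1 ∩ V2).1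
  have hx2 : x ∈ V2 := (hinter ▸ (rfl : x ∈ ({x} : Set V)) : x ∈ V1 ∩ V2).2
  have hsep' : ∀ a ∈ V2, ∀ b ∈ V1, a ≠ x → b ≠ x → ¬ G.Adj a b := fun a ha b hb hax hbx h =>
    hsep b hb a ha hbx hax h.symm
  have hunion' : V2 ∪ V1 = Set.univ := by rw [union_comm]; exact hunion
  have hinter' : V2 ∩ V1 = {x} := by rw [inter_comm]; exact hinter
  obtain ⟨D, hD, hc⟩ := domNumOn_exists G (Set.univ : Set V)
  rw [← hc]
  by_cases hxD : x ∈ D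
  · exact lower_mem G x V1 V2 D hunion hinter hsep hsep' hx1 hx2 hD hxD
  · obtain ⟨s, hs, hdom⟩ := hD.2 x (mem_univ x)
    have hadj : G.Adj s x := by
      rcases hdom with rfl | h
      · exact absurd hs hxD
      · exact h
    have hmem : s ∈ V1 ∪ V2 := by rw [hunion]; trivial
    rcases hmem with h1 | h2
    · exact lower_one G x V1 V2 D hunion hinter hsep hsep' hx1 hx2 hD hxD hs hadj h1
    · have := lower_one G x V2 V1 D hunion' hinter' hsep' hsep hx2 hx1 hD hxD hs hadj h2
      omega

lemma upper {V : Type*} [Fintype V] (G : SimpleGraph V) (x : V) (V1 V2 : Set V)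
    (hunion : V1 ∪ V2 = Set.univ) (hx2 : x ∈ V2)
    (hcrit : IsCritVertexOn G V1 x) :
    domNumOn G Set.univ + 1 ≤ domNumOn G V1 + domNumOn G V2 := by
  obtain ⟨D1, hD1, hc1⟩ := domNumOn_exists G (V1 \ {x})
  obtain ⟨D2, hD2, hc2⟩ := domNumOn_exists G V2
  have hdom : IsDomOn G Set.univ (D1 ∪ D2) := by
    refine ⟨subset_univ _, fun v _ => ?_⟩
    by_cases hv2 : v ∈ V2
    · obtain ⟨s, hs, h⟩ := hD2.2 v hv2
      exact ⟨s, Or.inr hs, h⟩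
    · have hv1 : v ∈ V1 := by
        have hmem : v ∈ V1 ∪ V2 := by rw [hunion]; trivial
        rcases hmem with h | h
        · exact h
        · exact absurd h hv2
      have hvx : v ≠ x := fun h => hv2 (h ▸ hx2)
      obtain ⟨s, hs, h⟩ := hD1.2 v ⟨hv1, hvx⟩
      exact ⟨s, Or.inl hs, h⟩
  have h1 : domNumOn G Set.univ ≤ (D1 ∪ D2).ncard := domNumOn_le G hdom
  have h2 : (D1 ∪ D2).ncard ≤ D1.ncard + D2.ncard := Set.ncard_union_le D1 D2
  have hlt : domNumOn G (V1 \ {x}) < domNumOn G V1 := hcrit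
  omega


/-- Coalescence: if x is a critical vertex of H₁ or of H₂, then
γ(G) = γ(H₁) + γ(H₂) − 1. -/
theorem stmt_8 {V : Type*} [Fintype V] (G : SimpleGraph V) (x : V) (V1 V2 : Set V)
    (hunion : V1 ∪ V2 = Set.univ) (hinter : V1 ∩ V2 = {x})
    (hsep : ∀ a ∈ V1, ∀ b ∈ V2, a ≠ x → b ≠ x → ¬ G.Adj a b)
    (hx1 : ∃ a ∈ V1, G.Adj x a) (hx2 : ∃ b ∈ V2, G.Adj x b)
    (hcrit : IsCritVertexOn G V1 x ∨ IsCritVertexOn G V2 x) :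
    domNum G = domNumOn G V1 + domNumOn G V2 - 1 := by
  have hxm1 : x ∈ V1 := (hinter ▸ (rfl : x ∈ ({x} : Set V)) : x ∈ V1 ∩ V2).1
  have hxm2 : x ∈ V2 := (hinter ▸ (rfl : x ∈ ({x} : Set V)) : x ∈ V1 ∩ V2).2
  have hlow := lower G x V1 V2 hunion hinter hsep
  have hup : domNumOn G Set.univ + 1 ≤ domNumOn G V1 + domNumOn G V2 := by
    rcases hcrit with h | h
    · exact upper G x V1 V2 hunion hxm2 h
    · have hunion' : V2 ∪ V1 = Set.univ := by rw [union_comm]; exact hunion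
      have := upper G x V2 V1 hunion' hxm1 h
      omega
  rw [domNum]
  omega
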